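/- Let D_1 and D_2 be K-linearly independent elements of the K-span of {δ, ∂_0, …, ∂_d} such that ⁅D_1, D_2⁆ = 0 and at least one of D_1, D_2 has nonzero coefficient of δ when expressed in the basis δ, ∂_0, …, ∂_d. Then there exist μ_0, …, μ_d ∈ K such that the K-span of {D_1, D_2} equals the K-span of {δ + Σ_{k=0}^d μ_k ∂_k, ∂_0}. -/

import Mathlib

open MvPolynomial Finset

lemma derivation_sum_apply {R A M : Type*} [CommSemiring R] [CommSemiring A] [Algebra R A]
    [AddCommMonoid M] [Module A M] [Module R M] {ι : Type*} (s : Finset ι)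
    (f : ι → Derivation R A M) (a : A) :
    (∑ i ∈ s, f i) a = ∑ i ∈ s, f i a := by
  classical
  induction s using Finset.induction_on with
  | empty => simp
  | insert _ _ h ih => simp [Finset.sum_insert h, Derivation.add_apply, ih]

lemma pderiv_prod_pow {σ : Type*} [DecidableEq σ] {K : Type*} [CommSemiring K] (i : σ)
    (s : Finset σ) (hi : i ∉ s) (n : σ → ℕ) :
    pderiv i (∏ j ∈ s, (X j : MvPolynomial σ K) ^ n j) = 0 := by
  induction s using Finset.induction_on with
  | empty => simp
  | insert _ _ h ih =>
    simp only [Finset.mem_insert, not_or] at hi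
    rw [Finset.prod_insert h, pderiv_mul, pderiv_pow,
      pderiv_X_of_ne (Ne.symm hi.1), ih hi.2]
    ring

lemma span_pair_helper {K V : Type*} [Field K] [AddCommGroup V] [Module K V]
    (a b c e : K) (E F D1 D2 : V) (h1 : D1 = a • E + b • F) (h2 : D2 = c • E + e • F)
    (hdet : a * e - b * c ≠ 0) :
    Submodule.span K ({D1, D2} : Set V) = Submodule.span K ({E, F} : Set V) := by
  apply le_antisymm
  · rw [Submodule.span_le]
    rintro x (rfl | rfl)
    · rw [h1]
      exact Submodule.add_mem _
        (Submodule.smul_mem _ _ (Submodule.subset_span (Set.mem_insert _ _)))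
        (Submodule.smul_mem _ _ (Submodule.subset_span (Set.mem_insert_of_mem _ rfl)))
    · rw [h2]
      exact Submodule.add_mem _
        (Submodule.smul_mem _ _ (Submodule.subset_span (Set.mem_insert _ _)))
        (Submodule.smul_mem _ _ (Submodule.subset_span (Set.mem_insert_of_mem _ rfl)))
  · rw [Submodule.span_le]
    have hE : E = (e / (a*e - b*c)) • D1 - (b / (a*e - b*c)) • D2 := by
      rw [h1, h2]; match_scalars <;> field_simp <;> ring_nf <;> field_simp [mul_comm e a ▸ hdet]
    have hF : F = (a / (a*e - b*c)) • D2 - (c / (a*e - b*c)) • D1 := by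
      rw [h1, h2]; match_scalars <;> field_simp <;> ring
    rintro x (rfl | rfl)
    · rw [hE]
      exact Submodule.sub_mem _
        (Submodule.smul_mem _ _ (Submodule.subset_span (Set.mem_insert _ _)))
        (Submodule.smul_mem _ _ (Submodule.subset_span (Set.mem_insert_of_mem _ rfl)))
    · rw [hF]
      exact Submodule.sub_mem _
        (Submodule.smul_mem _ _ (Submodule.subset_span (Set.mem_insert_of_mem _ rfl)))
        (Submodule.smul_mem _ _ (Submodule.subset_span (Set.mem_insert _ _)))


/-- The derivation `δ = (∏_{j=3}^m x_j^{α_{j1}}) ∂/∂x_1` of `K[x_1, …, x_m]`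
(variables are indexed by `Fin m`, so `x_1` is `X ⟨0,_⟩`, `x_2` is `X ⟨1,_⟩`, and the
indices `3 ≤ j ≤ m` are those `j : Fin m` with `2 ≤ j.val`). -/
noncomputable def deltaD (K : Type*) [Field K] (m : ℕ) (hm : 2 ≤ m) (α1 : Fin m → ℕ) :
    Derivation K (MvPolynomial (Fin m) K) (MvPolynomial (Fin m) K) :=
  (∏ j ∈ Finset.univ.filter (fun j : Fin m => 2 ≤ j.val),
      (X j : MvPolynomial (Fin m) K) ^ α1 j) • pderiv (⟨0, by omega⟩ : Fin m)

/-- The derivation `∂_k = x_1^k (∏_{j=3}^m x_j^{α_{j2} - k α_{j1}}) ∂/∂x_2`. -/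
noncomputable def partialD (K : Type*) [Field K] (m : ℕ) (hm : 2 ≤ m)
    (α1 α2 : Fin m → ℕ) (k : ℕ) :
    Derivation K (MvPolynomial (Fin m) K) (MvPolynomial (Fin m) K) :=
  ((X (⟨0, by omega⟩ : Fin m) : MvPolynomial (Fin m) K) ^ k *
      ∏ j ∈ Finset.univ.filter (fun j : Fin m => 2 ≤ j.val),
        (X j : MvPolynomial (Fin m) K) ^ (α2 j - k * α1 j)) •
    pderiv (⟨1, by omega⟩ : Fin m)

set_option maxHeartbeats 2000000 in
/-- If `D_1, D_2` are `K`-linearly independent elements of the span of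
`{δ, ∂_0, …, ∂_d}` with `⁅D_1, D_2⁆ = 0` and at least one of them has a nonzero
coefficient of `δ`, then `span{D_1, D_2} = span{δ + Σ μ_k ∂_k, ∂_0}` for suitable
`μ_0, …, μ_d ∈ K`. -/
theorem stmt14 (K : Type*) [Field K] [CharZero K] (m : ℕ) (hm : 2 ≤ m)
    (α1 α2 : Fin m → ℕ) (d : ℕ) (hd : 1 ≤ d)
    (hα : ∀ j : Fin m, 2 ≤ j.val → d * α1 j ≤ α2 j)
    (D1 D2 : Derivation K (MvPolynomial (Fin m) K) (MvPolynomial (Fin m) K))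
    (a1 a2 : K) (μ1 μ2 : ℕ → K)
    (hD1 : D1 = a1 • deltaD K m hm α1 +
      ∑ k ∈ Finset.range (d + 1), μ1 k • partialD K m hm α1 α2 k)
    (hD2 : D2 = a2 • deltaD K m hm α1 +
      ∑ k ∈ Finset.range (d + 1), μ2 k • partialD K m hm α1 α2 k)
    (ha : a1 ≠ 0 ∨ a2 ≠ 0)
    (hli : LinearIndependent K ![D1, D2])
    (hbr : ⁅D1, D2⁆ = 0) :
    ∃ μ : ℕ → K,
      Submodule.span K ({D1, D2} :
          Set (Derivation K (MvPolynomial (Fin m) K) (MvPolynomial (Fin m) K))) =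
        Submodule.span K
          ({deltaD K m hm α1 + ∑ k ∈ Finset.range (d + 1), μ k • partialD K m hm α1 α2 k,
            partialD K m hm α1 α2 0} :
          Set (Derivation K (MvPolynomial (Fin m) K) (MvPolynomial (Fin m) K))) := by
  classical
  set i0 : Fin m := ⟨0, by omega⟩ with hi0def
  set i1 : Fin m := ⟨1, by omega⟩ with hi1def
  set S : Finset (Fin m) := Finset.univ.filter (fun j : Fin m => 2 ≤ j.val) with hSdef
  set P : MvPolynomial (Fin m) K := ∏ j ∈ S, X j ^ α1 j with hPdef
  set Q : ℕ → MvPolynomial (Fin m) K :=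
    fun k => ∏ j ∈ S, X j ^ (α2 j - k * α1 j) with hQdef
  have hi01 : i0 ≠ i1 := by simp [hi0def, hi1def, Fin.ext_iff]
  have hi0S : i0 ∉ S := by simp [hSdef, hi0def]
  have hi1S : i1 ∉ S := by simp [hSdef, hi1def]
  have hjS : ∀ j ∈ S, j ≠ i0 := fun j hj => ne_of_mem_of_not_mem hj hi0S
  have hQi0 : ∀ k, pderiv i0 (Q k) = 0 := fun k => pderiv_prod_pow i0 S hi0S _
  have hQi1 : ∀ k, pderiv i1 (Q k) = 0 := fun k => pderiv_prod_pow i1 S hi1S _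
  -- unfolded action lemmas
  have hdelta : ∀ f, deltaD K m hm α1 f = P * pderiv i0 f := by
    intro f; rfl
  have hpartial : ∀ k f, partialD K m hm α1 α2 k f = (X i0 ^ k * Q k) * pderiv i1 f := by
    intro k f; rfl
  -- P * Q k = Q (k-1) for 1 ≤ k ≤ d
  have hPQ : ∀ k, 1 ≤ k → k ≤ d → P * Q k = Q (k - 1) := by
    intro k hk1 hkd
    rw [hPdef, hQdef]
    rw [← Finset.prod_mul_distrib]
    apply Finset.prod_congr rfl
    intro j hj
    rw [← pow_add]
    congr 1
    have h1 : k * α1 j ≤ d * α1 j := Nat.mul_le_mul_right _ hkd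
    have h2 : d * α1 j ≤ α2 j := hα j (by simpa [hSdef] using hj)
    obtain ⟨t, rfl⟩ : ∃ t, k = t + 1 := ⟨k - 1, by omega⟩
    simp only [Nat.add_sub_cancel]
    have h3 : (t + 1) * α1 j = t * α1 j + α1 j := by ring
    omega
  -- derivative facts about C k = X i0 ^ k * Q k
  have hC1 : ∀ k, pderiv i1 (X i0 ^ k * Q k) = 0 := by
    intro k
    rw [pderiv_mul, pderiv_pow, pderiv_X_of_ne hi01, hQi1]
    ring
  have hC0 : ∀ k, k ≤ d →
      P * pderiv i0 (X i0 ^ k * Q k) = (k : K) • (X i0 ^ (k - 1) * Q (k - 1)) := by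
    intro k hkd
    rw [pderiv_mul, pderiv_pow, pderiv_X_self, hQi0]
    rcases Nat.eq_zero_or_pos k with rfl | hk1
    · simp
    · rw [mul_zero, add_zero, mul_one]
      have : P * ((k : MvPolynomial (Fin m) K) * X i0 ^ (k - 1) * Q k)
          = (k : MvPolynomial (Fin m) K) * (X i0 ^ (k - 1) * (P * Q k)) := by ring
      rw [this, hPQ k hk1 hkd, smul_eq_C_mul, C_eq_coe_nat]
  -- applying operators
  have happ1 : ∀ (a : K) (μ : ℕ → K),
      (a • deltaD K m hm α1 + ∑ k ∈ Finset.range (d + 1), μ k • partialD K m hm α1 α2 k) (X i1)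
        = ∑ k ∈ Finset.range (d + 1), μ k • (X i0 ^ k * Q k) := by
    intro a μ
    rw [Derivation.add_apply, Derivation.smul_apply, hdelta, pderiv_X_of_ne (Ne.symm hi01),
      mul_zero, smul_zero, zero_add, derivation_sum_apply]
    apply Finset.sum_congr rfl
    intro k _
    rw [Derivation.smul_apply, hpartial, pderiv_X_self, mul_one]
  have happ2 : ∀ (a : K) (μ : ℕ → K) (g : MvPolynomial (Fin m) K), pderiv i1 g = 0 →
      (a • deltaD K m hm α1 + ∑ k ∈ Finset.range (d + 1), μ k • partialD K m hm α1 α2 k) g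
        = a • (P * pderiv i0 g) := by
    intro a μ g hg
    rw [Derivation.add_apply, Derivation.smul_apply, hdelta, derivation_sum_apply,
      Finset.sum_eq_zero, add_zero]
    intro k _
    rw [Derivation.smul_apply, hpartial, hg, mul_zero, smul_zero]
  have hg1 : ∀ μ : ℕ → K,
      pderiv i1 (∑ k ∈ Finset.range (d + 1), μ k • (X i0 ^ k * Q k)) = 0 := by
    intro μ
    rw [map_sum]
    apply Finset.sum_eq_zero
    intro k _
    rw [(pderiv i1).map_smul, hC1, smul_zero]
  have hderiv0 : ∀ μ : ℕ → K,
      P * pderiv i0 (∑ k ∈ Finset.range (d + 1), μ k • (X i0 ^ k * Q k))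
        = ∑ k ∈ Finset.range (d + 1), (μ k * k) • (X i0 ^ (k - 1) * Q (k - 1)) := by
    intro μ
    rw [map_sum, Finset.mul_sum]
    apply Finset.sum_congr rfl
    intro k hk
    rw [(pderiv i0).map_smul, mul_smul_comm, hC0 k (Nat.lt_succ_iff.mp (Finset.mem_range.mp hk)), smul_smul]
  have hbrX : (0 : MvPolynomial (Fin m) K)
      = ∑ k ∈ Finset.range (d + 1),
          ((a1 * μ2 k - a2 * μ1 k) * k) • (X i0 ^ (k - 1) * Q (k - 1)) := by
    have e2 : D2 (X i1) = ∑ k ∈ Finset.range (d + 1), μ2 k • (X i0 ^ k * Q k) := by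
      rw [hD2]; exact happ1 a2 μ2
    have e1 : D1 (X i1) = ∑ k ∈ Finset.range (d + 1), μ1 k • (X i0 ^ k * Q k) := by
      rw [hD1]; exact happ1 a1 μ1
    have f1 : D1 (D2 (X i1))
        = a1 • ∑ k ∈ Finset.range (d + 1), (μ2 k * k) • (X i0 ^ (k - 1) * Q (k - 1)) := by
      rw [e2, hD1, happ2 a1 μ1 _ (hg1 μ2), hderiv0]
    have f2 : D2 (D1 (X i1))
        = a2 • ∑ k ∈ Finset.range (d + 1), (μ1 k * k) • (X i0 ^ (k - 1) * Q (k - 1)) := by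
      rw [e1, hD2, happ2 a2 μ2 _ (hg1 μ1), hderiv0]
    have h0 : ⁅D1, D2⁆ (X i1) = (0 : MvPolynomial (Fin m) K) := by rw [hbr]; rfl
    rw [Derivation.commutator_apply, f1, f2, Finset.smul_sum, Finset.smul_sum,
      ← Finset.sum_sub_distrib] at h0
    rw [← h0]
    apply Finset.sum_congr rfl
    intro k _
    rw [smul_smul, smul_smul, ← sub_smul]
    congr 1
    ring
  -- push to Polynomial K via evaluation
  set φ : MvPolynomial (Fin m) K →ₐ[K] Polynomial K :=
    aeval (fun i : Fin m => if i = i0 then (Polynomial.X : Polynomial K) else 1) with hφdef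
  have hφ : ∀ n k : ℕ, φ (X i0 ^ n * Q k) = Polynomial.X ^ n := by
    intro n k
    rw [map_mul, map_pow, hφdef, aeval_X, if_pos rfl, hQdef, map_prod]
    rw [Finset.prod_eq_one, mul_one]
    intro j hj
    rw [map_pow, aeval_X, if_neg (hjS j hj), one_pow]
  have hpolysum : (0 : Polynomial K)
      = ∑ k ∈ Finset.range d,
          ((a1 * μ2 (k + 1) - a2 * μ1 (k + 1)) * (k + 1 : ℕ)) • (Polynomial.X : Polynomial K) ^ k := by
    have h := congrArg φ hbrX
    rw [map_zero, map_sum] at h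
    simp only [map_smul, hφ] at h
    rw [Finset.sum_range_succ'] at h
    simpa using h
  have hkey : ∀ k, 1 ≤ k → k ≤ d → a1 * μ2 k = a2 * μ1 k := by
    intro k hk1 hkd
    obtain ⟨n, rfl⟩ : ∃ n, k = n + 1 := ⟨k - 1, by omega⟩
    have h := congrArg (fun p => Polynomial.coeff p n) hpolysum
    simp only [Polynomial.coeff_zero, Polynomial.finset_sum_coeff, Polynomial.coeff_smul,
      Polynomial.coeff_X_pow, smul_eq_mul, mul_ite, mul_one, mul_zero,
      Finset.sum_ite_eq, Finset.mem_range] at h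
    rw [if_pos (by omega)] at h
    have hne : ((n + 1 : ℕ) : K) ≠ 0 := Nat.cast_ne_zero.mpr (Nat.succ_ne_zero n)
    have := (mul_eq_zero.mp h.symm).resolve_right hne
    linear_combination this
  have pair := LinearIndependent.pair_iff.mp hli
  by_cases h1 : a1 = 0
  · -- case a1 = 0, a2 ≠ 0
    have h2 : a2 ≠ 0 := ha.resolve_left (not_not.mpr h1)
    refine ⟨fun k => μ2 k / a2, ?_⟩
    have hμ1 : ∀ k, 1 ≤ k → k ≤ d → μ1 k = 0 := by
      intro k hk1 hkd
      have h := hkey k hk1 hkd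
      rw [h1, zero_mul] at h
      rcases mul_eq_zero.mp h.symm with h' | h'
      · exact absurd h' h2
      · exact h'
    have hμ10 : μ1 0 ≠ 0 := by
      intro h0
      have hD1z : D1 = 0 := by
        rw [hD1, h1, zero_smul, zero_add]
        apply Finset.sum_eq_zero
        intro k hk
        rcases Nat.eq_zero_or_pos k with rfl | hk1
        · rw [h0, zero_smul]
        · rw [hμ1 k hk1 (Nat.lt_succ_iff.mp (Finset.mem_range.mp hk)), zero_smul]
      exact one_ne_zero (pair 1 0 (by rw [hD1z]; simp)).1
    have hE1 : D1 = (0 : K) • (deltaD K m hm α1 +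
          ∑ k ∈ Finset.range (d + 1), (μ2 k / a2) • partialD K m hm α1 α2 k) +
        μ1 0 • partialD K m hm α1 α2 0 := by
      rw [hD1, h1, zero_smul, zero_add, zero_smul, zero_add, Finset.sum_range_succ',
        Finset.sum_eq_zero fun k hk => by
          rw [hμ1 (k + 1) (by omega) (by have := Finset.mem_range.mp hk; omega), zero_smul],
        zero_add]
    have hE2 : D2 = a2 • (deltaD K m hm α1 +
          ∑ k ∈ Finset.range (d + 1), (μ2 k / a2) • partialD K m hm α1 α2 k) +
        (0 : K) • partialD K m hm α1 α2 0 := by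
      rw [hD2, zero_smul, add_zero, smul_add, Finset.smul_sum]
      congr 1
      apply Finset.sum_congr rfl
      intro k _
      rw [smul_smul]
      congr 1
      field_simp
    exact span_pair_helper 0 (μ1 0) a2 0 _ _ D1 D2 hE1 hE2
      (by simpa using mul_ne_zero hμ10 h2)
  · -- case a1 ≠ 0
    refine ⟨fun k => μ1 k / a1, ?_⟩
    set e0 : K := μ2 0 - a2 * μ1 0 / a1 with he0
    have hE1 : D1 = a1 • (deltaD K m hm α1 +
          ∑ k ∈ Finset.range (d + 1), (μ1 k / a1) • partialD K m hm α1 α2 k) +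
        (0 : K) • partialD K m hm α1 α2 0 := by
      rw [zero_smul, add_zero, hD1, smul_add, Finset.smul_sum]
      congr 1
      apply Finset.sum_congr rfl
      intro k _
      rw [smul_smul]
      congr 1
      field_simp
    have hE2 : D2 = a2 • (deltaD K m hm α1 +
          ∑ k ∈ Finset.range (d + 1), (μ1 k / a1) • partialD K m hm α1 α2 k) +
        e0 • partialD K m hm α1 α2 0 := by
      rw [hD2, smul_add, Finset.smul_sum, add_assoc]
      congr 1
      rw [Finset.sum_range_succ', Finset.sum_range_succ', add_assoc]
      congr 1
      · apply Finset.sum_congr rfl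
        intro k hk
        rw [smul_smul]
        congr 1
        have hkk := hkey (k + 1) (by omega) (by have := Finset.mem_range.mp hk; omega)
        field_simp
        linear_combination hkk
      · rw [smul_smul, ← add_smul]
        congr 1
        rw [he0]
        field_simp
        ring
    have he0ne : e0 ≠ 0 := by
      intro h0
      have hrel : (a2 / a1) • D1 + (-1 : K) • D2 = 0 := by
        rw [hE1, hE2, h0]
        match_scalars <;> field_simp <;> ring
      have := (pair (a2 / a1) (-1) hrel).2
      norm_num at this
    exact span_pair_helper a1 0 a2 e0 _ _ D1 D2 hE1 hE2
      (by simpa using mul_ne_zero h1 he0ne)
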